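/- arXiv:2310.17906 — 2 statements merged into one kernel-verified Lean document; each statement's English description precedes it below -/
import Mathlib

section
/- For partitions λ and μ of n, let λ' and μ' denote their conjugates (transposes). Then ‖λ − μ‖₁ = ‖λ' − μ'‖₁, i.e., the L1 distance between partitions of n is invariant under simultaneous conjugation. -/
/-- A partition of `n`, identified with its weakly decreasing sequence of
nonnegative integers of length `n` (padded with zeros) summing to `n`. -/
def IsPartitionVec (n : ℕ) (l : Fin n → ℕ) : Prop :=
  Antitone l ∧ ∑ i, l i = n

/-- The L1 distance `‖λ − μ‖₁ = Σ_{i=1}^n |λ_i − μ_i|`. -/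
def l1Dist {n : ℕ} (l m : Fin n → ℕ) : ℕ :=
  ∑ i, ((l i : ℤ) - (m i : ℤ)).natAbs

/-- The conjugate (transpose) partition: `λ'_i = #{j : λ_j ≥ i}` (here indexed
from `0`, so the entry at `i : Fin n` is `#{j : λ_j ≥ i + 1}`). -/
def conjVec {n : ℕ} (l : Fin n → ℕ) : Fin n → ℕ :=
  fun i => (Finset.univ.filter (fun j => i.val + 1 ≤ l j)).card

/-!
Both sides count the cells of the symmetric difference of the Ferrers diagrams of `λ` and `μ`,
which lie in the `n × n` box: counted row by row this is `‖λ − μ‖₁`, and counted column by column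
it is `‖λ' − μ'‖₁`, since the diagram of `λ'` is the transpose of that of `λ`.
-/

open Finset

theorem Fin.card_filter_not_lt_iff_lt {n a b : ℕ} (ha : a ≤ n) (hb : b ≤ n) :
    #{j : Fin n | ¬(j.val < a ↔ j.val < b)} = ((a : ℤ) - b).natAbs := by
  wlog hab : a ≤ b generalizing a b
  · rw [← Int.natAbs_neg, neg_sub]
    simpa only [iff_comm] using this hb ha (by omega)
  have hIco : ({j : Fin n | ¬(j.val < a ↔ j.val < b)} : Finset (Fin n)).map Fin.valEmbedding
      = Ico a b := by
    ext j
    simp only [mem_map, mem_filter, mem_univ, true_and, Fin.valEmbedding_apply, mem_Ico]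
    constructor
    · rintro ⟨j, hj, rfl⟩; omega
    · intro hj; exact ⟨⟨j, by omega⟩, by simp only; omega, rfl⟩
  rw [← card_map, hIco, Nat.card_Ico]
  omega

theorem Fin.val_lt_card_filter_iff_of_antitone {n : ℕ} {p : Fin n → Prop} [DecidablePred p]
    (hp : Antitone p) (i : Fin n) : i.val < #{i' | p i'} ↔ p i := by
  constructor
  · intro hi
    by_contra hpi
    have hsub : ({i' | p i'} : Finset (Fin n)) ⊆ Iio i := fun i' hi' => by
      simp only [mem_filter, mem_univ, true_and] at hi'
      exact mem_Iio.mpr (lt_of_not_ge fun hle => hpi (hp hle hi'))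
    have := card_le_card hsub
    rw [Fin.card_Iio] at this
    omega
  · intro hpi
    have hsub : Iic i ⊆ ({i' | p i'} : Finset (Fin n)) := fun i' hi' => by
      simpa using hp (mem_Iic.mp hi') hpi
    have := card_le_card hsub
    rw [Fin.card_Iic] at this
    omega

theorem val_lt_conjVec_iff {n : ℕ} {l : Fin n → ℕ} (hl : Antitone l) (i j : Fin n) :
    i.val < conjVec l j ↔ j.val < l i :=
  Fin.val_lt_card_filter_iff_of_antitone (p := fun i => j.val + 1 ≤ l i)
    (fun _ _ h hle => hle.trans (hl h)) i

theorem conjVec_le {n : ℕ} (l : Fin n → ℕ) (j : Fin n) : conjVec l j ≤ n :=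
  (card_filter_le _ _).trans (card_fin n).le

theorem IsPartitionVec.apply_le {n : ℕ} {l : Fin n → ℕ} (hl : IsPartitionVec n l) (i : Fin n) :
    l i ≤ n :=
  hl.2 ▸ single_le_sum (fun _ _ => Nat.zero_le _) (mem_univ i)

/-- For partitions `λ` and `μ` of `n` with conjugates `λ'` and `μ'`, we have
`‖λ − μ‖₁ = ‖λ' − μ'‖₁`: the L1 distance is invariant under simultaneous
conjugation. -/
theorem l1Dist_conj_conj (n : ℕ) (l m : Fin n → ℕ)
    (hl : IsPartitionVec n l) (hm : IsPartitionVec n m) :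
    l1Dist (conjVec l) (conjVec m) = l1Dist l m := by
  calc l1Dist (conjVec l) (conjVec m)
      = ∑ j : Fin n, #{i : Fin n | ¬(i.val < conjVec l j ↔ i.val < conjVec m j)} := by
        simp only [l1Dist, Fin.card_filter_not_lt_iff_lt (conjVec_le l _) (conjVec_le m _)]
    _ = ∑ j : Fin n, #{i : Fin n | ¬(j.val < l i ↔ j.val < m i)} := by
        simp only [val_lt_conjVec_iff hl.1, val_lt_conjVec_iff hm.1]
    _ = ∑ i : Fin n, #{j : Fin n | ¬(j.val < l i ↔ j.val < m i)} := by
        simp only [card_filter]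
        exact sum_comm
    _ = l1Dist l m := by
        simp only [l1Dist, Fin.card_filter_not_lt_iff_lt (hl.apply_le _) (hm.apply_le _)]
end

section
/- For the difference matrix Z_n of partitions of n, conjugation λ ↦ λ' induces a permutation of the index set fixing Z_n (i.e., z_{λ',μ'} = z_{λ,μ} for all λ, μ); consequently, if the largest eigenvalue of Z_n is simple with positive eigenvector w = (w_λ), then w_{λ'} = w_λ for every partition λ of n. -/
/-- The type of partitions of `n`, identified with weakly decreasing sequences
of nonnegative integers of length `n` (padded with zeros) summing to `n`. -/
def PartVec (n : ℕ) : Type :=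
  {l : Fin n → ℕ // Antitone l ∧ ∑ i, l i = n}

theorem PartVec.le (n : ℕ) (p : PartVec n) (i : Fin n) : p.1 i ≤ n := by
  have h := Finset.single_le_sum (f := p.1) (fun j _ => Nat.zero_le (p.1 j))
    (Finset.mem_univ i)
  rw [p.2.2] at h; exact h

noncomputable instance (n : ℕ) : Fintype (PartVec n) :=
  Fintype.ofInjective
    (fun p : PartVec n => fun i : Fin n =>
      (⟨p.1 i, Nat.lt_succ_of_le (PartVec.le n p i)⟩ : Fin (n + 1)))
    (fun p q h => Subtype.ext (funext fun i => congrArg Fin.val (congrFun h i)))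

instance (n : ℕ) : DecidableEq (PartVec n) := fun p q =>
  decidable_of_iff (p.1 = q.1) Subtype.ext_iff.symm
/-- The conjugate (transpose) partition of a partition of `n`:
`λ'_i = #{j : λ_j ≥ i}` (with `0`-based indexing, the entry at `i : Fin n` is
`#{j : λ_j ≥ i + 1}`). -/
def PartVec.conj {n : ℕ} (p : PartVec n) : PartVec n :=
  ⟨fun i => (Finset.univ.filter (fun j => i.val + 1 ≤ p.1 j)).card, by
    constructor
    · intro i j hij
      apply Finset.card_le_card
      intro k hk
      simp only [Finset.mem_filter, Finset.mem_univ, true_and] at hk ⊢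
      have : (i : ℕ) ≤ (j : ℕ) := hij
      omega
    · have hle : ∀ j, p.1 j ≤ n := PartVec.le n p
      calc ∑ i : Fin n, (Finset.univ.filter (fun j => i.val + 1 ≤ p.1 j)).card
          = ∑ i : Fin n, ∑ j : Fin n, if i.val + 1 ≤ p.1 j then 1 else 0 := by
            refine Finset.sum_congr rfl fun i _ => ?_
            rw [Finset.card_filter]
        _ = ∑ j : Fin n, ∑ i : Fin n, if i.val + 1 ≤ p.1 j then 1 else 0 :=
            Finset.sum_comm
        _ = ∑ j : Fin n, p.1 j := by
            refine Finset.sum_congr rfl fun j _ => ?_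
            rw [Fin.sum_univ_eq_sum_range (fun i => if i + 1 ≤ p.1 j then 1 else 0)]
            rw [← Finset.card_filter]
            have : (Finset.range n).filter (fun i => i + 1 ≤ p.1 j) =
                Finset.range (p.1 j) := by
              ext a
              simp only [Finset.mem_filter, Finset.mem_range]
              have := hle j
              omega
            rw [this, Finset.card_range]
        _ = n := p.2.2⟩

/-!
Writing `|λ_k - μ_k|` as the number of cells in row `k` that lie in exactly one of the Young
diagrams of `λ` and `μ`, the distance `z_{λ,μ}` is the size of their symmetric difference;
transposing both diagrams preserves it, so `z_{λ',μ'} = z_{λ,μ}`. Hence if `w` is an eigenvector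
for `t`, so is `w ∘ conj`; simplicity of `t` gives `w ∘ conj = c • w`, and comparing coordinate
sums (nonzero as `w > 0`) gives `c = 1`.
-/

open Finset Matrix

theorem Fin.mem_iff_lt_card_of_isLowerSet {n : ℕ} {s : Finset (Fin n)}
    (hs : IsLowerSet (s : Set (Fin n))) (k : Fin n) : k ∈ s ↔ k.val < #s := by
  constructor
  · intro hk
    have := card_le_card fun j hj => hs (mem_Iic.1 hj) hk
    rw [Fin.card_Iic] at this
    omega
  · intro hk
    by_contra hks
    have := card_le_card fun j (hj : j ∈ s) =>
      mem_Iio.2 (lt_of_not_ge fun hkj => hks (hs hkj hj))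
    rw [Fin.card_Iio] at this
    omega

theorem Int.natAbs_sub_eq_card_filter {n a b : ℕ} (ha : a ≤ n) (hb : b ≤ n) :
    ((a : ℤ) - b).natAbs = #{k : Fin n | ¬(k.val < a ↔ k.val < b)} := by
  rw [card_filter, Fin.sum_univ_eq_sum_range (fun k => if ¬(k < a ↔ k < b) then 1 else 0),
    ← card_filter]
  have : {k ∈ Finset.range n | ¬(k < a ↔ k < b)} = Ico (min a b) (max a b) := by
    ext k
    simp only [mem_filter, mem_range, mem_Ico]
    omega
  rw [this, Nat.card_Ico]
  omega

namespace PartVec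

variable {n : ℕ}

theorem lt_conj_iff (p : PartVec n) (i k : Fin n) : k.val < p.conj.1 i ↔ i.val < p.1 k := by
  have hlower : IsLowerSet (({j | i.val + 1 ≤ p.1 j} : Finset (Fin n)) : Set (Fin n)) :=
    fun a b hba ha => by
      simp only [coe_filter, mem_univ, true_and, Set.mem_ofPred_eq] at ha ⊢
      exact ha.trans (p.2.1 hba)
  rw [conj, ← Fin.mem_iff_lt_card_of_isLowerSet hlower, mem_filter]
  simp only [mem_univ, true_and, Nat.succ_le_iff]

theorem conj_involutive : Function.Involutive (conj (n := n)) := fun p => by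
  refine Subtype.ext (funext fun i => ?_)
  change #{k : Fin n | i.val + 1 ≤ p.conj.1 k} = p.1 i
  simp only [Nat.succ_le_iff, lt_conj_iff, Fin.card_filter_val_lt,
    min_eq_right (PartVec.le n p i)]

theorem l1Dist_conj (p q : PartVec n) : l1Dist p.conj.1 q.conj.1 = l1Dist p.1 q.1 := by
  have hcount (r s : PartVec n) (i : Fin n) :
      ((r.1 i : ℤ) - s.1 i).natAbs = #{k : Fin n | ¬(k.val < r.1 i ↔ k.val < s.1 i)} :=
    Int.natAbs_sub_eq_card_filter (PartVec.le n r i) (PartVec.le n s i)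
  -- both sides count the cells `(i, k)` lying in exactly one of the two Young diagrams
  simp only [l1Dist, hcount, lt_conj_iff, card_filter]
  exact sum_comm

end PartVec

theorem Matrix.comp_perm_eq_of_finrank_eigenspace_eq_one {ι K : Type*} [Fintype ι]
    [DecidableEq ι] [Field K] {A : Matrix ι ι K} (σ : Equiv.Perm ι)
    (hA : ∀ i j, A (σ i) (σ j) = A i j) {t : K}
    (ht : Module.finrank K (Module.End.eigenspace (toLin' A) t) = 1)
    {w : ι → K} (hw : A *ᵥ w = t • w) (hsum : ∑ i, w i ≠ 0) : w ∘ σ = w := by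
  have hmem (v : ι → K) (hv : A *ᵥ v = t • v) : v ∈ Module.End.eigenspace (toLin' A) t := by
    rwa [Module.End.mem_eigenspace_iff, toLin'_apply]
  have hwσ : A *ᵥ (w ∘ σ) = t • (w ∘ σ) := by
    have hsub : A.submatrix σ σ = A := ext hA
    rw [← hsub, submatrix_mulVec_equiv, Function.comp_assoc, Equiv.self_comp_symm,
      Function.comp_id, hw]
    rfl
  have hw0 : (⟨w, hmem w hw⟩ : Module.End.eigenspace (toLin' A) t) ≠ 0 := by
    intro h
    apply hsum
    simp [show w = 0 from congrArg Subtype.val h]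
  obtain ⟨c, hc⟩ := (finrank_eq_one_iff_of_nonzero' _ hw0).1 ht ⟨w ∘ σ, hmem _ hwσ⟩
  have hcw : c • w = w ∘ σ := congrArg Subtype.val hc
  -- a permutation preserves the coordinate sum, which forces the scalar to be `1`
  have hc1 : c = 1 := by
    have : c * ∑ i, w i = ∑ i, w i := by
      rw [mul_sum, ← Equiv.sum_comp σ w]
      exact sum_congr rfl fun i _ => congrFun hcw i
    exact mul_right_cancel₀ hsum (this.trans (one_mul _).symm)
  rw [← hcw, hc1, one_smul]

/-- Conjugation `λ ↦ λ'` induces a permutation of the set of partitions of `n`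
fixing the difference matrix `Z_n` (i.e. `z_{λ',μ'} = z_{λ,μ}`); consequently,
if the largest eigenvalue of `Z_n` is simple with a positive eigenvector
`w = (w_λ)`, then `w_{λ'} = w_λ` for every partition `λ` of `n`. -/
theorem difference_matrix_conj_invariance (n : ℕ)
    (Z : Matrix (PartVec n) (PartVec n) ℝ)
    (hZ : ∀ p q : PartVec n, Z p q = (l1Dist p.1 q.1 : ℝ)) :
    (∀ p q : PartVec n, Z p.conj q.conj = Z p q) ∧
    (∀ t : ℝ, ∀ w : PartVec n → ℝ,
      t ∈ spectrum ℝ Z → (∀ s ∈ spectrum ℝ Z, s ≤ t) →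
      Module.finrank ℝ (Module.End.eigenspace (Matrix.toLin' Z) t) = 1 →
      Z.mulVec w = t • w → (∀ p, 0 < w p) →
      ∀ p : PartVec n, w p.conj = w p) := by
  have hconj (p q : PartVec n) : Z p.conj q.conj = Z p q := by
    rw [hZ, hZ, PartVec.l1Dist_conj]
  refine ⟨hconj, fun t w _ _ ht hw hpos p => ?_⟩
  have hsum : ∑ q, w q ≠ 0 := by
    have : Nonempty (PartVec n) := ⟨p⟩
    exact (sum_pos (fun q _ => hpos q) univ_nonempty).ne'
  exact congrFun (Matrix.comp_perm_eq_of_finrank_eigenspace_eq_one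
    PartVec.conj_involutive.toPerm hconj ht hw hsum) p
end
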